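/- arXiv:1910.05713 — 2 statements merged into one kernel-verified Lean document; each statement's English description precedes it below -/
import Mathlib

section
/- (Theorem 3, case 2.) If χ²·v_min²/v_mid² < γ_th ≤ χ², then Pr(J_B ≤ γ_th·J_E) = S₁, where S₁ = ψ(m+3)²·J_{B,min}^{−1/(m+3)}·[(J_{B,min}/γ_th)^{−1/(m+3)} − J_{E,max}^{−1/(m+3)}] − (ψ/2)(m+3)²·γ_th^{−1/(m+3)}·[(J_{B,min}/γ_th)^{−2/(m+3)} − J_{E,max}^{−2/(m+3)}]. -/
/-!
Put `x = ‖U‖² + l²`, `y = ‖W‖² + l²` and `M = m + 3`. Since `J = p c² x^(-M)` is decreasing in the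
squared distance, `J_B ≤ γ_th J_E` holds iff `y ≤ k x` with `k = (γ_th b / a)^(1/M)`; the case
hypotheses give `k ≤ 1` and `ρ² + l² ≤ k (D² + l²)`.

A Haar measure scales balls by `r ^ dim`, so `‖W‖²` is uniform on `[ρ², D²]` and, given `U = u`,
the event has probability `k (‖u‖² - s)⁺ / (D² - ρ²)` with `s = (ρ² + l²)/k - l² ∈ [0, D²]`
(here `k ≤ 1` keeps the threshold below `D²`). Averaging over the disc in polar coordinates gives
`(2 / D²) ∫₀^D r k (r² - s)⁺ / (D² - ρ²) dr = (k X - Y)² / (2 k D² (D² - ρ²))` with `X = D² + l²`,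
`Y = ρ² + l²`, and expanding `J_{B,min}^(-1/M)`, `J_{E,max}^(-1/M)` and `ψ` shows that this is `S₁`.
-/

open MeasureTheory ProbabilityTheory Metric Set Real Module

section AddHaar

variable {E : Type*} [NormedAddCommGroup E] [NormedSpace ℝ E] [FiniteDimensional ℝ E]
  [MeasurableSpace E] [BorelSpace E] (μ : Measure E) [μ.IsAddHaarMeasure]

lemma addHaar_closedBall_diff_ball [Nontrivial E] {ρ R : ℝ} (hρ : 0 ≤ ρ) (hR : 0 ≤ R) :
    μ (closedBall (0 : E) R \ ball 0 ρ) =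
      ENNReal.ofReal (R ^ finrank ℝ E - ρ ^ finrank ℝ E) * μ (ball 0 1) := by
  rcases le_or_gt ρ R with hρR | hRρ
  · rw [measure_sdiff (ball_subset_closedBall.trans (closedBall_subset_closedBall hρR))
      measurableSet_ball.nullMeasurableSet measure_ball_lt_top.ne,
      Measure.addHaar_closedBall μ _ hR, Measure.addHaar_ball μ _ hρ,
      ← ENNReal.sub_mul fun _ _ => measure_ball_lt_top.ne,
      ← ENNReal.ofReal_sub _ (by positivity)]
  · rw [sdiff_eq_empty.2 (closedBall_subset_ball hRρ), measure_empty,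
      ENNReal.ofReal_of_nonpos (sub_nonpos.2 (pow_le_pow_left₀ hR hRρ.le _)), zero_mul]

lemma cond_closedBall_diff_ball_norm_pow_le [Nontrivial E] {ρ R s : ℝ} (hρ : 0 ≤ ρ) (hρR : ρ < R)
    (hs : s ≤ R ^ finrank ℝ E) :
    μ[{w | ‖w‖ ^ finrank ℝ E ≤ s} | closedBall 0 R \ ball 0 ρ] =
      ENNReal.ofReal ((s - ρ ^ finrank ℝ E) / (R ^ finrank ℝ E - ρ ^ finrank ℝ E)) := by
  set d := finrank ℝ E
  have hd : d ≠ 0 := finrank_pos.ne'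
  have hR : 0 ≤ R := hρ.trans hρR.le
  have hgap : 0 < R ^ d - ρ ^ d := sub_pos.2 (pow_lt_pow_left₀ hρR hρ hd)
  rcases lt_or_ge s 0 with hs0 | hs0
  · have hempty : {w : E | ‖w‖ ^ d ≤ s} = ∅ :=
      eq_empty_iff_forall_notMem.2 fun w hw => (hs0.trans_le (by positivity)).not_ge hw
    rw [hempty, measure_empty, ENNReal.ofReal_of_nonpos
      (div_nonpos_of_nonpos_of_nonneg (by linarith [pow_nonneg hρ d]) hgap.le)]
  set r := s ^ (d⁻¹ : ℝ)
  have hr : 0 ≤ r := by positivity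
  have hrd : r ^ d = s := rpow_inv_natCast_pow hs0 hd
  have hrR : r ≤ R := (pow_le_pow_iff_left₀ hr hR hd).1 (hrd ▸ hs)
  have hball : {w : E | ‖w‖ ^ d ≤ s} = closedBall 0 r := by
    ext w
    rw [mem_ofPred_eq, mem_closedBall_zero_iff, ← hrd, pow_le_pow_iff_left₀ (norm_nonneg w) hr hd]
  have hinter : (closedBall (0 : E) R \ ball 0 ρ) ∩ closedBall 0 r = closedBall 0 r \ ball 0 ρ := by
    rw [← inter_sdiff_right_comm, inter_eq_right.2 (closedBall_subset_closedBall hrR)]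
  rw [hball, cond_apply (measurableSet_closedBall.diff measurableSet_ball), hinter,
    addHaar_closedBall_diff_ball μ hρ hR, addHaar_closedBall_diff_ball μ hρ hr, hrd,
    mul_comm, ← div_eq_mul_inv, ENNReal.mul_div_mul_right _ _ (measure_ball_pos μ _ one_pos).ne'
      measure_ball_lt_top.ne, ENNReal.ofReal_div_of_pos hgap]

lemma setIntegral_closedBall_comp_norm [Nontrivial E] {R : ℝ} (hR : 0 ≤ R) (f : ℝ → ℝ) :
    ∫ x in closedBall (0 : E) R, f ‖x‖ ∂μ =
      finrank ℝ E * μ.real (ball 0 1) * ∫ y in 0..R, y ^ (finrank ℝ E - 1) * f y := by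
  have hind : (closedBall (0 : E) R).indicator (fun x => f ‖x‖) =
      fun x => (Icc 0 R).indicator f ‖x‖ := by
    ext x
    simp [indicator, norm_nonneg]
  have hIoc : Ioi (0 : ℝ) ∩ Icc 0 R = Ioc 0 R := by
    ext y
    simp only [mem_inter_iff, mem_Ioi, mem_Icc, mem_Ioc]
    constructor
    · rintro ⟨h0, -, hR⟩; exact ⟨h0, hR⟩
    · rintro ⟨h0, hR⟩; exact ⟨h0, h0.le, hR⟩
  rw [← integral_indicator measurableSet_closedBall, hind, integral_fun_norm_addHaar,
    intervalIntegral.integral_of_le hR, ← hIoc, ← setIntegral_indicator measurableSet_Icc]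
  simp only [nsmul_eq_mul, smul_eq_mul, indicator_mul_right, mul_assoc]

lemma integral_cond_closedBall_comp_norm [Nontrivial E] {R : ℝ} (hR : 0 < R) (f : ℝ → ℝ) :
    ∫ x, f ‖x‖ ∂μ[|closedBall 0 R] =
      finrank ℝ E / R ^ finrank ℝ E * ∫ y in 0..R, y ^ (finrank ℝ E - 1) * f y := by
  have hB1 : 0 < μ.real (ball 0 1) :=
    ENNReal.toReal_pos (measure_ball_pos μ _ one_pos).ne' measure_ball_lt_top.ne
  rw [ProbabilityTheory.cond, integral_smul_measure, setIntegral_closedBall_comp_norm μ hR.le,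
    ENNReal.toReal_inv, ← measureReal_def, Measure.addHaar_real_closedBall μ _ hR.le, smul_eq_mul]
  field_simp

lemma lintegral_cond_closedBall_ofReal_comp_norm [Nontrivial E] {R : ℝ} (hR : 0 < R)
    {f : ℝ → ℝ} (hf : Continuous f) (hf0 : ∀ y, 0 ≤ f y) :
    ∫⁻ x, ENNReal.ofReal (f ‖x‖) ∂μ[|closedBall 0 R] =
      ENNReal.ofReal
        (finrank ℝ E / R ^ finrank ℝ E * ∫ y in 0..R, y ^ (finrank ℝ E - 1) * f y) := by
  have hint : Integrable (fun x => f ‖x‖) μ[|closedBall 0 R] :=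
    ((hf.comp continuous_norm).continuousOn.integrableOn_compact
      (isCompact_closedBall _ _)).smul_measure
        (ENNReal.inv_ne_top.2 (measure_closedBall_pos μ _ hR).ne')
  rw [← integral_cond_closedBall_comp_norm μ hR,
    ofReal_integral_eq_lintegral_ofReal hint (ae_of_all _ fun x => hf0 _)]

end AddHaar

lemma integral_mul_max_zero_sq_sub {R s : ℝ} (hR : 0 ≤ R) (hs : 0 ≤ s) (hsR : s ≤ R ^ 2) :
    ∫ y in 0..R, y * max 0 (y ^ 2 - s) = (R ^ 2 - s) ^ 2 / 4 := by
  set r := √s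
  have hr : 0 ≤ r := sqrt_nonneg s
  have hrs : r ^ 2 = s := sq_sqrt hs
  have hrR : r ≤ R := (pow_le_pow_iff_left₀ hr hR two_ne_zero).1 (hrs ▸ hsR)
  have hcont : Continuous fun y : ℝ => y * max 0 (y ^ 2 - s) := by fun_prop
  rw [← intervalIntegral.integral_add_adjacent_intervals (b := r)
    (hcont.intervalIntegrable _ _) (hcont.intervalIntegrable _ _)]
  have hleft : ∫ y in 0..r, y * max 0 (y ^ 2 - s) = 0 := by
    refine (intervalIntegral.integral_congr fun y hy => ?_).trans intervalIntegral.integral_zero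
    rw [uIcc_of_le hr] at hy
    have : y ^ 2 ≤ s := hrs ▸ pow_le_pow_left₀ hy.1 hy.2 2
    simp [max_eq_left (sub_nonpos.2 this)]
  have hright : ∫ y in r..R, y * max 0 (y ^ 2 - s) = ∫ y in r..R, y * (y ^ 2 - s) := by
    refine intervalIntegral.integral_congr fun y hy => ?_
    rw [uIcc_of_le hrR] at hy
    have : s ≤ y ^ 2 := hrs ▸ pow_le_pow_left₀ hr hy.1 2
    simp only [max_eq_right (sub_nonneg.2 this)]
  have hderiv : ∀ y, HasDerivAt (fun y : ℝ => (y ^ 2 - s) ^ 2 / 4) (y * (y ^ 2 - s)) y :=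
    fun y => ((((hasDerivAt_pow 2 y).sub_const s).fun_pow 2).div_const 4).congr_deriv
      (by push_cast; ring)
  rw [hleft, hright, zero_add, intervalIntegral.integral_eq_sub_of_hasDerivAt
    (fun y _ => hderiv y)
    ((by fun_prop : Continuous fun y : ℝ => y * (y ^ 2 - s)).intervalIntegrable _ _), hrs]
  ring

lemma ProbabilityTheory.IndepFun.measure_prodMk_preimage_eq_lintegral {Ω α β : Type*}
    [MeasurableSpace Ω] [MeasurableSpace α] [MeasurableSpace β] {P : Measure Ω}
    [IsFiniteMeasure P] {X : Ω → α} {Y : Ω → β} (hXY : IndepFun X Y P) (hX : Measurable X)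
    (hY : Measurable Y) {S : Set (α × β)} (hS : MeasurableSet S) :
    P ((fun ω => (X ω, Y ω)) ⁻¹' S) = ∫⁻ x, P.map Y (Prod.mk x ⁻¹' S) ∂P.map X := by
  rw [← Measure.map_apply (hX.prodMk hY) hS,
    (indepFun_iff_map_prod_eq_prod_map_map hX.aemeasurable hY.aemeasurable).1 hXY,
    Measure.prod_apply hS]

/-- `p H²` for the line-of-sight gain `H = c x^(-M/2)` at squared distance `x`, with `M = m + 3`. -/
noncomputable def lambertianSNR (p c M x : ℝ) : ℝ := p * (c * x ^ (-M / 2)) ^ 2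

lemma lambertianSNR_rpow_neg_inv {p c M x : ℝ} (hp : 0 < p) (hc : 0 < c) (hM : 0 < M)
    (hx : 0 < x) : lambertianSNR p c M x ^ (-1 / M) = x / (p * c ^ 2) ^ (1 / M) := by
  have hsq : (c * x ^ (-M / 2)) ^ 2 = c ^ 2 * x ^ (-M) := by
    rw [mul_pow, ← rpow_mul_natCast hx.le]
    norm_num
  rw [lambertianSNR, hsq, ← mul_assoc, mul_rpow (by positivity) (by positivity),
    ← rpow_mul hx.le, show -M * (-1 / M) = 1 by field_simp, rpow_one,
    neg_div, rpow_neg (by positivity), inv_mul_eq_div]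

lemma lambertianSNR_pos {p c M x : ℝ} (hp : 0 < p) (hc : 0 < c) (hx : 0 < x) :
    0 < lambertianSNR p c M x := by
  unfold lambertianSNR; positivity

lemma lambertianSNR_le_iff {p q c M x y : ℝ} (hp : 0 < p) (hq : 0 < q) (hc : 0 < c)
    (hM : 0 < M) (hx : 0 < x) (hy : 0 < y) :
    lambertianSNR p c M x ≤ lambertianSNR q c M y ↔ y ≤ (q / p) ^ (1 / M) * x := by
  have hratio : (q / p) ^ (1 / M) = (q * c ^ 2) ^ (1 / M) / (p * c ^ 2) ^ (1 / M) := by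
    rw [← div_rpow (by positivity) (by positivity), mul_div_mul_right _ _ (by positivity)]
  rw [← rpow_le_rpow_iff_of_neg (z := -1 / M) (lambertianSNR_pos hq hc hy)
      (lambertianSNR_pos hp hc hx) (div_neg_of_neg_of_pos (by norm_num) hM),
    lambertianSNR_rpow_neg_inv hp hc hM hx, lambertianSNR_rpow_neg_inv hq hc hM hy, hratio,
    div_le_div_iff₀ (by positivity) (by positivity), div_mul_eq_mul_div,
    le_div_iff₀ (by positivity), mul_comm x]

section TwoDim

variable {E : Type*} [NormedAddCommGroup E] [NormedSpace ℝ E] [FiniteDimensional ℝ E]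
  [MeasurableSpace E] [BorelSpace E] {μ : Measure E} [μ.IsAddHaarMeasure]

lemma cond_closedBall_diff_ball_sq_norm_add_le_mul (hE : finrank ℝ E = 2) {ρ R l k : ℝ} (hρ : 0 ≤ ρ)
    (hρR : ρ < R) (hk0 : 0 < k) (hk1 : k ≤ 1) {u : E} (hu : ‖u‖ ≤ R) :
    μ[{w | ‖w‖ ^ 2 + l ^ 2 ≤ k * (‖u‖ ^ 2 + l ^ 2)} | closedBall 0 R \ ball 0 ρ] =
      ENNReal.ofReal (k / (R ^ 2 - ρ ^ 2) * max 0 (‖u‖ ^ 2 - ((ρ ^ 2 + l ^ 2) / k - l ^ 2))) := by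
  have := Module.nontrivial_of_finrank_eq_succ hE
  have hgap : 0 < R ^ 2 - ρ ^ 2 := sub_pos.2 (pow_lt_pow_left₀ hρR hρ two_ne_zero)
  have hset : {w : E | ‖w‖ ^ 2 + l ^ 2 ≤ k * (‖u‖ ^ 2 + l ^ 2)} =
      {w | ‖w‖ ^ finrank ℝ E ≤ k * (‖u‖ ^ 2 + l ^ 2) - l ^ 2} := by
    simp only [hE, le_sub_iff_add_le]
  have hs : k * (‖u‖ ^ 2 + l ^ 2) - l ^ 2 ≤ R ^ finrank ℝ E := by
    have : ‖u‖ ^ 2 ≤ R ^ 2 := pow_le_pow_left₀ (norm_nonneg u) hu 2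
    rw [hE]
    nlinarith [mul_le_mul_of_nonneg_right hk1 (by positivity : 0 ≤ ‖u‖ ^ 2 + l ^ 2)]
  rw [hset, cond_closedBall_diff_ball_norm_pow_le μ hρ hρR hs, hE,
    mul_max_of_nonneg _ _ (by positivity),
    ENNReal.ofReal_max, mul_zero, ENNReal.ofReal_zero, max_eq_right zero_le]
  congr 1
  field_simp
  ring

theorem measure_sq_norm_add_le_mul {Ω : Type*} [MeasurableSpace Ω] {P : Measure Ω}
    [IsFiniteMeasure P] (hE : finrank ℝ E = 2) {ρ R l k : ℝ} (hρ : 0 ≤ ρ) (hρR : ρ < R)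
    (hk0 : 0 < k) (hk1 : k ≤ 1) (hkR : ρ ^ 2 + l ^ 2 ≤ k * (R ^ 2 + l ^ 2)) {U W : Ω → E}
    (hU : Measurable U) (hW : Measurable W) (hUunif : pdf.IsUniform U (closedBall 0 R) P μ)
    (hWunif : pdf.IsUniform W (closedBall 0 R \ ball 0 ρ) P μ) (hUW : IndepFun U W P) :
    P {ω | ‖W ω‖ ^ 2 + l ^ 2 ≤ k * (‖U ω‖ ^ 2 + l ^ 2)} =
      ENNReal.ofReal
        ((k * (R ^ 2 + l ^ 2) - (ρ ^ 2 + l ^ 2)) ^ 2 / (2 * k * R ^ 2 * (R ^ 2 - ρ ^ 2))) := by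
  have := Module.nontrivial_of_finrank_eq_succ hE
  have hR : 0 < R := hρ.trans_lt hρR
  have hgap : 0 < R ^ 2 - ρ ^ 2 := sub_pos.2 (pow_lt_pow_left₀ hρR hρ two_ne_zero)
  set s := (ρ ^ 2 + l ^ 2) / k - l ^ 2 with hs_def
  have hs : 0 ≤ s := by
    rw [sub_nonneg, le_div_iff₀ hk0]
    nlinarith [sq_nonneg ρ, sq_nonneg l]
  have hsR : s ≤ R ^ 2 := by
    rw [sub_le_iff_le_add, div_le_iff₀ hk0]
    linarith
  have hS : MeasurableSet {p : E × E | ‖p.2‖ ^ 2 + l ^ 2 ≤ k * (‖p.1‖ ^ 2 + l ^ 2)} :=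
    measurableSet_le (by fun_prop) (by fun_prop)
  have hslice : ∀ᵐ u ∂μ[|closedBall 0 R],
      μ[Prod.mk u ⁻¹' {p : E × E | ‖p.2‖ ^ 2 + l ^ 2 ≤ k * (‖p.1‖ ^ 2 + l ^ 2)} |
        closedBall 0 R \ ball 0 ρ] = ENNReal.ofReal (k / (R ^ 2 - ρ ^ 2) * max 0 (‖u‖ ^ 2 - s)) :=
    (ae_cond_mem measurableSet_closedBall).mono fun u hu =>
      cond_closedBall_diff_ball_sq_norm_add_le_mul hE hρ hρR hk0 hk1 (mem_closedBall_zero_iff.1 hu)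
  rw [show {ω | ‖W ω‖ ^ 2 + l ^ 2 ≤ k * (‖U ω‖ ^ 2 + l ^ 2)} =
      (fun ω => (U ω, W ω)) ⁻¹' {p : E × E | ‖p.2‖ ^ 2 + l ^ 2 ≤ k * (‖p.1‖ ^ 2 + l ^ 2)} from rfl,
    hUW.measure_prodMk_preimage_eq_lintegral hU hW hS, hUunif, hWunif, lintegral_congr_ae hslice,
    lintegral_cond_closedBall_ofReal_comp_norm μ hR
      (f := fun y => k / (R ^ 2 - ρ ^ 2) * max 0 (y ^ 2 - s)) (by fun_prop)
      fun y => by positivity, hE]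
  simp only [Nat.add_one_sub_one, pow_one, mul_left_comm _ (k / _),
    intervalIntegral.integral_const_mul,
    integral_mul_max_zero_sq_sub hR.le hs hsR]
  rw [hs_def]
  congr 1
  field_simp
  ring

end TwoDim

lemma sop_case_two_formula_eq {a b c γ D ρ M X Y J₁ J₂ Ξ₁ Ξ₂ ψ : ℝ} (ha : 0 < a) (hb : 0 < b)
    (hc : 0 < c) (hγ : 0 < γ) (hM : 0 < M) (hX : 0 < X)
    (hY : 0 < Y) (hJ₁ : J₁ = lambertianSNR a c M X) (hJ₂ : J₂ = lambertianSNR b c M Y)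
    (hΞ₁ : Ξ₁ = 2 / (M * D ^ 2) * c ^ (2 / M))
    (hΞ₂ : Ξ₂ = 2 / (M * (D ^ 2 - ρ ^ 2)) * c ^ (2 / M))
    (hψ : ψ = Ξ₁ * Ξ₂ / 4 * (a * b) ^ (1 / M)) :
    ψ * M ^ 2 * J₁ ^ (-1 / M) * ((J₁ / γ) ^ (-1 / M) - J₂ ^ (-1 / M)) -
        ψ / 2 * M ^ 2 * γ ^ (-1 / M) * ((J₁ / γ) ^ (-2 / M) - J₂ ^ (-2 / M)) =
      ((γ * b / a) ^ (1 / M) * X - Y) ^ 2 /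
        (2 * (γ * b / a) ^ (1 / M) * D ^ 2 * (D ^ 2 - ρ ^ 2)) := by
  have hJ₁γ : J₁ / γ = lambertianSNR (a / γ) c M X := by
    rw [hJ₁, lambertianSNR, lambertianSNR]; ring
  have hroot : (a / γ * c ^ 2) ^ (1 / M) = (a * c ^ 2) ^ (1 / M) / γ ^ (1 / M) := by
    rw [div_mul_eq_mul_div, div_rpow (by positivity) hγ.le]
  have hsq : ∀ z : ℝ, 0 ≤ z → z ^ (-2 / M) = (z ^ (-1 / M)) ^ 2 := fun z hz => by
    rw [← rpow_mul_natCast hz]; ring_nf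
  have hc2 : c ^ (2 / M) = (c ^ 2) ^ (1 / M) := by
    rw [← rpow_natCast, ← rpow_mul hc.le]; ring_nf
  have hψ' : ψ = (a * c ^ 2) ^ (1 / M) * (b * c ^ 2) ^ (1 / M) /
      (M ^ 2 * D ^ 2 * (D ^ 2 - ρ ^ 2)) := by
    rw [hψ, hΞ₁, hΞ₂, hc2, mul_rpow ha.le hb.le, mul_rpow ha.le (by positivity),
      mul_rpow hb.le (by positivity)]
    field_simp
    norm_num
  have hk : (γ * b / a) ^ (1 / M) =
      γ ^ (1 / M) * (b * c ^ 2) ^ (1 / M) / (a * c ^ 2) ^ (1 / M) := by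
    rw [← mul_div_mul_right (γ * b) a (pow_pos hc 2).ne', mul_assoc,
      div_rpow (by positivity) (by positivity), mul_rpow hγ.le (by positivity)]
  have hγM : γ ^ (-1 / M) = (γ ^ (1 / M))⁻¹ := by rw [neg_div, rpow_neg hγ.le]
  rw [hsq _ (by rw [hJ₁γ]; exact (lambertianSNR_pos (by positivity) hc hX).le),
    hsq _ (by rw [hJ₂]; exact (lambertianSNR_pos hb hc hY).le), hJ₁γ,
    lambertianSNR_rpow_neg_inv (by positivity) hc hM hX, hroot, hJ₁,
    lambertianSNR_rpow_neg_inv ha hc hM hX, hJ₂, lambertianSNR_rpow_neg_inv hb hc hM hY,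
    hγM, hψ', hk]
  have : 0 < γ ^ (1 / M) := by positivity
  have : 0 < (a * c ^ 2) ^ (1 / M) := by positivity
  have : 0 < (b * c ^ 2) ^ (1 / M) := by positivity
  field_simp
  ring

theorem sop_case_two_general
    (D ρ l m c : ℝ) (hρ0 : 0 ≤ ρ) (hρD : ρ < D) (hl : 0 < l) (hm : 0 < m)
    (hc : 0 < c)
    (vmin vmid : ℝ)
    (hvmin : vmin = c * (D ^ 2 + l ^ 2) ^ (-(m + 3) / 2))
    (hvmid : vmid = c * (ρ ^ 2 + l ^ 2) ^ (-(m + 3) / 2))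
    (a b : ℝ) (ha : 0 < a) (hb : 0 < b)
    {Ω : Type*} [MeasureSpace Ω] [IsProbabilityMeasure (ℙ : Measure Ω)]
    (U W : Ω → EuclideanSpace ℝ (Fin 2)) (hU : Measurable U) (hW : Measurable W)
    (hUlaw : Measure.map U (ℙ : Measure Ω) =
      (volume (Metric.closedBall (0 : EuclideanSpace ℝ (Fin 2)) D))⁻¹ •
        volume.restrict (Metric.closedBall (0 : EuclideanSpace ℝ (Fin 2)) D))
    (hWlaw : Measure.map W (ℙ : Measure Ω) =
      (volume (Metric.closedBall (0 : EuclideanSpace ℝ (Fin 2)) D \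
          Metric.ball (0 : EuclideanSpace ℝ (Fin 2)) ρ))⁻¹ •
        volume.restrict (Metric.closedBall (0 : EuclideanSpace ℝ (Fin 2)) D \
          Metric.ball (0 : EuclideanSpace ℝ (Fin 2)) ρ))
    (hindep : IndepFun U W (ℙ : Measure Ω))
    (HB HE : Ω → ℝ)
    (hHB : ∀ ω, HB ω = c * (‖U ω‖ ^ 2 + l ^ 2) ^ (-(m + 3) / 2))
    (hHE : ∀ ω, HE ω = c * (‖W ω‖ ^ 2 + l ^ 2) ^ (-(m + 3) / 2))
    (JB JE : Ω → ℝ)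
    (hJB : ∀ ω, JB ω = a * HB ω ^ 2) (hJE : ∀ ω, JE ω = b * HE ω ^ 2)
    (γth : ℝ) (hγ : 0 < γth)
    (Ξ₁ Ξ₂ ψ : ℝ)
    (hΞ₁ : Ξ₁ = 2 / ((m + 3) * D ^ 2) * c ^ (2 / (m + 3)))
    (hΞ₂ : Ξ₂ = 2 / ((m + 3) * (D ^ 2 - ρ ^ 2)) * c ^ (2 / (m + 3)))
    (hψ : ψ = Ξ₁ * Ξ₂ / 4 * (a * b) ^ (1 / (m + 3)))
    (JBmin JEmax : ℝ)
    (hJBmin : JBmin = a * vmin ^ 2)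
    (hJEmax : JEmax = b * vmid ^ 2)
    (hcase₁ : a / b * vmin ^ 2 / vmid ^ 2 < γth) (hcase₂ : γth ≤ a / b) :
    (ℙ : Measure Ω) {ω | JB ω ≤ γth * JE ω} =
      ENNReal.ofReal
        (ψ * (m + 3) ^ 2 * JBmin ^ (-1 / (m + 3)) *
            ((JBmin / γth) ^ (-1 / (m + 3)) - JEmax ^ (-1 / (m + 3))) -
          ψ / 2 * (m + 3) ^ 2 * γth ^ (-1 / (m + 3)) *
            ((JBmin / γth) ^ (-2 / (m + 3)) - JEmax ^ (-2 / (m + 3)))) := by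
  have hM : 0 < m + 3 := by linarith
  set k := (γth * b / a) ^ (1 / (m + 3))
  have hk1 : k ≤ 1 :=
    rpow_le_one (by positivity) ((div_le_one ha).2 ((le_div_iff₀ hb).1 hcase₂)) (by positivity)
  have hJmin : JBmin = lambertianSNR a c (m + 3) (D ^ 2 + l ^ 2) := by rw [hJBmin, hvmin]; rfl
  have hJmax : JEmax = lambertianSNR b c (m + 3) (ρ ^ 2 + l ^ 2) := by rw [hJEmax, hvmid]; rfl
  have hcase : ρ ^ 2 + l ^ 2 ≤ k * (D ^ 2 + l ^ 2) := by
    have hvmid2 : 0 < vmid ^ 2 := by rw [hvmid]; positivity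
    rw [div_lt_iff₀ hvmid2, div_mul_eq_mul_div, div_lt_iff₀ hb] at hcase₁
    rw [← lambertianSNR_le_iff ha (by positivity) hc hM (by positivity) (by positivity),
      lambertianSNR, lambertianSNR, ← hvmin, ← hvmid]
    linarith
  have hevent : {ω | JB ω ≤ γth * JE ω} =
      {ω | ‖W ω‖ ^ 2 + l ^ 2 ≤ k * (‖U ω‖ ^ 2 + l ^ 2)} := by
    ext ω
    have hJB' : JB ω = lambertianSNR a c (m + 3) (‖U ω‖ ^ 2 + l ^ 2) := by rw [hJB, hHB]; rfl
    have hJE' : γth * JE ω = lambertianSNR (γth * b) c (m + 3) (‖W ω‖ ^ 2 + l ^ 2) := by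
      rw [hJE, hHE, lambertianSNR, mul_assoc]
    rw [mem_ofPred_eq, mem_ofPred_eq, hJB', hJE',
      lambertianSNR_le_iff ha (by positivity) hc hM (by positivity) (by positivity)]
  rw [hevent, measure_sq_norm_add_le_mul finrank_euclideanSpace_fin hρ0 hρD (by positivity) hk1
      hcase hU hW hUlaw hWlaw hindep,
    sop_case_two_formula_eq ha hb hc hγ hM (by positivity)
      (by positivity) hJmin hJmax hΞ₁ hΞ₂ hψ]

/-- Theorem 3, case 2: if `χ²·v_min²/v_mid² < γ_th ≤ χ²` (with `χ² = a/b`), then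
`Pr(J_B ≤ γ_th·J_E) = S₁`. -/
theorem sop_case_two
    (D ρ l m c : ℝ) (hD : 0 < D) (hρ0 : 0 ≤ ρ) (hρD : ρ < D) (hl : 0 < l) (hm : 0 < m)
    (hc : 0 < c)
    (vmin vmid vmax : ℝ)
    (hvmin : vmin = c * (D ^ 2 + l ^ 2) ^ (-(m + 3) / 2))
    (hvmid : vmid = c * (ρ ^ 2 + l ^ 2) ^ (-(m + 3) / 2))
    (hvmax : vmax = c * l ^ (-(m + 3)))
    (a b : ℝ) (ha : 0 < a) (hb : 0 < b)
    {Ω : Type*} [MeasureSpace Ω] [IsProbabilityMeasure (ℙ : Measure Ω)]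
    (U W : Ω → EuclideanSpace ℝ (Fin 2)) (hU : Measurable U) (hW : Measurable W)
    (hUlaw : Measure.map U (ℙ : Measure Ω) =
      (volume (Metric.closedBall (0 : EuclideanSpace ℝ (Fin 2)) D))⁻¹ •
        volume.restrict (Metric.closedBall (0 : EuclideanSpace ℝ (Fin 2)) D))
    (hWlaw : Measure.map W (ℙ : Measure Ω) =
      (volume (Metric.closedBall (0 : EuclideanSpace ℝ (Fin 2)) D \
          Metric.ball (0 : EuclideanSpace ℝ (Fin 2)) ρ))⁻¹ •
        volume.restrict (Metric.closedBall (0 : EuclideanSpace ℝ (Fin 2)) D \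
          Metric.ball (0 : EuclideanSpace ℝ (Fin 2)) ρ))
    (hindep : IndepFun U W (ℙ : Measure Ω))
    (HB HE : Ω → ℝ)
    (hHB : ∀ ω, HB ω = c * (‖U ω‖ ^ 2 + l ^ 2) ^ (-(m + 3) / 2))
    (hHE : ∀ ω, HE ω = c * (‖W ω‖ ^ 2 + l ^ 2) ^ (-(m + 3) / 2))
    (JB JE : Ω → ℝ)
    (hJB : ∀ ω, JB ω = a * HB ω ^ 2) (hJE : ∀ ω, JE ω = b * HE ω ^ 2)
    (γth : ℝ) (hγ : 0 < γth)
    (Ξ₁ Ξ₂ ψ : ℝ)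
    (hΞ₁ : Ξ₁ = 2 / ((m + 3) * D ^ 2) * c ^ (2 / (m + 3)))
    (hΞ₂ : Ξ₂ = 2 / ((m + 3) * (D ^ 2 - ρ ^ 2)) * c ^ (2 / (m + 3)))
    (hψ : ψ = Ξ₁ * Ξ₂ / 4 * (a * b) ^ (1 / (m + 3)))
    (JBmin JBmax JEmin JEmax : ℝ)
    (hJBmin : JBmin = a * vmin ^ 2) (hJBmax : JBmax = a * vmax ^ 2)
    (hJEmin : JEmin = b * vmin ^ 2) (hJEmax : JEmax = b * vmid ^ 2)
    (hcase₁ : a / b * vmin ^ 2 / vmid ^ 2 < γth) (hcase₂ : γth ≤ a / b) :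
    (ℙ : Measure Ω) {ω | JB ω ≤ γth * JE ω} =
      ENNReal.ofReal
        (ψ * (m + 3) ^ 2 * JBmin ^ (-1 / (m + 3)) *
            ((JBmin / γth) ^ (-1 / (m + 3)) - JEmax ^ (-1 / (m + 3))) -
          ψ / 2 * (m + 3) ^ 2 * γth ^ (-1 / (m + 3)) *
            ((JBmin / γth) ^ (-2 / (m + 3)) - JEmax ^ (-2 / (m + 3)))) :=
  sop_case_two_general D ρ l m c hρ0 hρD hl hm hc vmin vmid hvmin hvmid a b ha hb U W hU hW hUlaw
    hWlaw hindep HB HE hHB hHE JB JE hJB hJE γth hγ Ξ₁ Ξ₂ ψ hΞ₁ hΞ₂ hψ JBmin JEmax hJBmin hJEmax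
    hcase₁ hcase₂
end

section
/- (Theorem 3, case 4.) If χ²·v_max²/v_mid² < γ_th ≤ χ²·v_max²/v_min², then Pr(J_B ≤ γ_th·J_E) = S₃, where S₃ = ψ(m+3)²·J_{B,min}^{−1/(m+3)}·[J_{E,min}^{−1/(m+3)} − (J_{B,max}/γ_th)^{−1/(m+3)}] − (ψ/2)(m+3)²·γ_th^{−1/(m+3)}·[J_{E,min}^{−2/(m+3)} − (J_{B,max}/γ_th)^{−2/(m+3)}] + ψ(m+3)²·(J_{B,min}^{−1/(m+3)} − J_{B,max}^{−1/(m+3)})·[(J_{B,max}/γ_th)^{−1/(m+3)} − J_{E,max}^{−1/(m+3)}]. -/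
/-!
Write `s = ‖U‖²`, `t = ‖W‖²` and `k = (a / (γ_th b))^(1/(m+3))`. Since
`J_B = a c² (s + l²)^(-(m+3))` and `J_E = b c² (t + l²)^(-(m+3))`, the event `J_B ≤ γ_th J_E`
is `k (t + l²) ≤ s + l²`. In the plane, `‖·‖²` pushes Lebesgue measure forward to `π` times
Lebesgue measure on `[0, ∞)`, so the squared norm of a uniform point of the annulus
`ρ ≤ |w| ≤ D` is uniform on `[ρ², D²]`, and `(s, t)` is uniform on the rectangle
`[0, D²] × [ρ², D²]`. The two case conditions say that the line `k (t + l²) = s + l²` meets the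
left edge of the rectangle and meets its top edge at `s = x₀ = k (D² + l²) - l²`, so the event
misses only a triangle of area `x₀² / (2k)`. The probability `1 - x₀² / (2k D² (D² - ρ²))` is
`S₃` rewritten in the paper's parameters.
-/

open MeasureTheory ProbabilityTheory Metric Set

open scoped ENNReal

lemma MeasureTheory.Measure.ext_of_Iic_of_ne_top (μ ν : Measure ℝ) (hμ : ∀ x, μ (Iic x) ≠ ∞)
    (h : ∀ x, μ (Iic x) = ν (Iic x)) : μ = ν := by
  refine μ.ext_of_Ioc' ν
    (fun a b _ => ne_top_of_le_ne_top (hμ b) (measure_mono Ioc_subset_Iic_self)) fun a b hab => ?_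
  have hsub : Iic a ⊆ Iic b := Iic_subset_Iic.2 hab.le
  rw [← Iic_sdiff_Iic, measure_sdiff hsub nullMeasurableSet_Iic (hμ a),
    measure_sdiff hsub nullMeasurableSet_Iic (h a ▸ hμ a), h a, h b]

namespace ProbabilityTheory

variable {α : Type*} [MeasurableSpace α] {μ : Measure α}

lemma map_cond_preimage {β : Type*} [MeasurableSpace β] {f : α → β} (hf : Measurable f)
    {t : Set β} (ht : MeasurableSet t) : (μ[|f ⁻¹' t]).map f = (μ.map f)[|t] := by
  rw [cond, cond, Measure.map_smul, ← Measure.restrict_map hf ht, Measure.map_apply hf ht]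

lemma cond_smul_measure {c : ℝ≥0∞} (hc₀ : c ≠ 0) (hc : c ≠ ∞) (s : Set α) :
    (c • μ)[|s] = μ[|s] := by
  rw [cond, cond, Measure.smul_apply, Measure.restrict_smul, smul_smul, smul_eq_mul,
    ENNReal.mul_inv (.inl hc₀) (.inl hc), mul_right_comm, ENNReal.inv_mul_cancel hc₀ hc, one_mul]

lemma cond_restrict_of_subset {s t : Set α} (h : t ⊆ s) : (μ.restrict s)[|t] = μ[|t] := by
  rw [cond, cond, Measure.restrict_eq_self _ h, Measure.restrict_restrict_of_subset h]

lemma IndepFun.map_prodMk_comp [IsFiniteMeasure μ] {β γ δ ε : Type*} [MeasurableSpace β]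
    [MeasurableSpace γ] [MeasurableSpace δ] [MeasurableSpace ε] {X : α → β} {Y : α → γ}
    {f : β → δ} {g : γ → ε} (hXY : IndepFun X Y μ) (hX : Measurable X) (hY : Measurable Y)
    (hf : Measurable f) (hg : Measurable g) :
    μ.map (fun ω => (f (X ω), g (Y ω))) = ((μ.map X).map f).prod ((μ.map Y).map g) := by
  rw [Measure.map_map hf hX, Measure.map_map hg hY]
  exact (indepFun_iff_map_prod_eq_prod_map_map (hf.comp hX).aemeasurable
    (hg.comp hY).aemeasurable).1 (hXY.comp hf hg)

end ProbabilityTheory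

namespace EuclideanSpace

lemma volume_preimage_norm_sq_Iic_fin_two (x : ℝ) :
    volume ((fun u : EuclideanSpace ℝ (Fin 2) => ‖u‖ ^ 2) ⁻¹' Iic x) =
      ENNReal.ofReal (Real.pi * x) := by
  rcases lt_or_ge x 0 with hx | hx
  · have hempty : (fun u : EuclideanSpace ℝ (Fin 2) => ‖u‖ ^ 2) ⁻¹' Iic x = ∅ :=
      eq_empty_of_forall_notMem fun u hu => (hx.trans_le (by positivity)).not_ge hu
    rw [hempty, measure_empty, ENNReal.ofReal_of_nonpos (by nlinarith [Real.pi_pos])]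
  · have hball : (fun u : EuclideanSpace ℝ (Fin 2) => ‖u‖ ^ 2) ⁻¹' Iic x =
        closedBall 0 (Real.sqrt x) := by
      ext u
      simp [Real.le_sqrt (norm_nonneg u) hx]
    rw [hball, volume_closedBall_fin_two, ← ENNReal.ofReal_pow (Real.sqrt_nonneg x),
      Real.sq_sqrt hx, ← ENNReal.ofReal_mul hx, mul_comm]

lemma map_norm_sq_volume_fin_two :
    volume.map (fun u : EuclideanSpace ℝ (Fin 2) => ‖u‖ ^ 2) =
      ENNReal.ofReal Real.pi • volume.restrict (Ici 0) := by
  have hf : Measurable (fun u : EuclideanSpace ℝ (Fin 2) => ‖u‖ ^ 2) := by fun_prop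
  refine Measure.ext_of_Iic_of_ne_top _ _ (fun x => ?_) fun x => ?_ <;>
    rw [Measure.map_apply hf measurableSet_Iic, volume_preimage_norm_sq_Iic_fin_two]
  · exact ENNReal.ofReal_ne_top
  · rw [Measure.smul_apply, Measure.restrict_apply measurableSet_Iic, Iic_inter_Ici,
      Real.volume_Icc, smul_eq_mul, ← ENNReal.ofReal_mul Real.pi_pos.le, sub_zero]

lemma map_norm_sq_cond_annulus_fin_two {R₁ R₂ : ℝ} (hR₁ : 0 ≤ R₁) (hR₂ : 0 ≤ R₂) :
    (volume[|closedBall (0 : EuclideanSpace ℝ (Fin 2)) R₂ \ ball 0 R₁]).map (‖·‖ ^ 2) =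
      volume[|Icc (R₁ ^ 2) (R₂ ^ 2)] := by
  have hpre : closedBall (0 : EuclideanSpace ℝ (Fin 2)) R₂ \ ball 0 R₁ =
      (‖·‖ ^ 2) ⁻¹' Icc (R₁ ^ 2) (R₂ ^ 2) := by
    ext u
    simp [sq_le_sq₀ hR₁ (norm_nonneg u), sq_le_sq₀ (norm_nonneg u) hR₂, and_comm]
  rw [hpre, map_cond_preimage (by fun_prop) measurableSet_Icc, map_norm_sq_volume_fin_two,
    cond_smul_measure (by simpa using Real.pi_pos) ENNReal.ofReal_ne_top,
    cond_restrict_of_subset (Icc_subset_Ici_self.trans (Ici_subset_Ici.2 (sq_nonneg R₁)))]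

lemma map_norm_sq_cond_closedBall_fin_two {R : ℝ} (hR : 0 ≤ R) :
    (volume[|closedBall (0 : EuclideanSpace ℝ (Fin 2)) R]).map (‖·‖ ^ 2) =
      volume[|Icc 0 (R ^ 2)] := by
  simpa using map_norm_sq_cond_annulus_fin_two le_rfl hR

end EuclideanSpace

section UniformInterval

variable {a b : ℝ}

lemma measureReal_cond_Icc_Iic (hab : a < b) {z : ℝ} (hz : a ≤ z) :
    (volume[|Icc a b]).real (Iic z) = 1 - max (b - z) 0 / (b - a) := by
  have hinter : Icc a b ∩ Iic z = Icc a (min b z) := by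
    ext x
    simp [and_assoc]
  rw [measureReal_def, cond_apply' measurableSet_Iic, hinter, Real.volume_Icc,
    Real.volume_Icc, ENNReal.toReal_mul, ENNReal.toReal_inv, ENNReal.toReal_ofReal (by linarith),
    ENNReal.toReal_ofReal (by simp [hz, hab.le])]
  have hba : b - a ≠ 0 := by linarith
  field_simp
  rcases le_total b z with h | h
  · rw [min_eq_left h, max_eq_right (by linarith)]
    ring
  · rw [min_eq_right h, max_eq_left (by linarith)]
    ring

lemma integral_cond_Icc (hab : a ≤ b) (f : ℝ → ℝ) :
    ∫ x, f x ∂volume[|Icc a b] = (∫ x in a..b, f x) / (b - a) := by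
  rw [ProbabilityTheory.cond, integral_smul_measure, Real.volume_Icc, ENNReal.toReal_inv,
    ENNReal.toReal_ofReal (by linarith), integral_Icc_eq_integral_Ioc,
    ← intervalIntegral.integral_of_le hab, smul_eq_mul, inv_mul_eq_div]

lemma intervalIntegral.integral_max_sub_zero {c : ℝ} (hac : a ≤ c) (hcb : c ≤ b) :
    ∫ x in a..b, max (c - x) 0 = (c - a) ^ 2 / 2 := by
  have hcont : Continuous fun x : ℝ => max (c - x) 0 := by fun_prop
  have hleft : ∫ x in a..c, max (c - x) 0 = ∫ x in a..c, (c - x) :=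
    integral_congr fun x hx => by
      rw [uIcc_of_le hac] at hx
      exact max_eq_left (by linarith [hx.2])
  have hright : ∫ x in c..b, max (c - x) 0 = ∫ _ in c..b, (0 : ℝ) :=
    integral_congr fun x hx => by
      rw [uIcc_of_le hcb] at hx
      exact max_eq_right (by linarith [hx.1])
  rw [← integral_add_adjacent_intervals (hcont.intervalIntegrable a c)
      (hcont.intervalIntegrable c b), hleft, hright,
    integral_sub intervalIntegrable_const intervalIntegrable_id]
  simp only [integral_const, integral_id, integral_zero, smul_eq_mul]
  ring

/-- The region below the line lies over the whole rectangle except for the triangle with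
vertices `(a₁, b₂ - (c - a₁) / k)`, `(a₁, b₂)` and `(c, b₂)`. -/
lemma prod_cond_Icc_below_line {a₁ b₁ a₂ b₂ c k : ℝ} (hab₁ : a₁ < b₁) (hab₂ : a₂ < b₂)
    (hc₁ : a₁ ≤ c) (hc₂ : c ≤ b₁) (hk : 0 < k) (hline : c - a₁ ≤ k * (b₂ - a₂)) :
    ((volume[|Icc a₁ b₁]).prod (volume[|Icc a₂ b₂])) {p | p.2 ≤ b₂ + (p.1 - c) / k} =
      ENNReal.ofReal (1 - (c - a₁) ^ 2 / (2 * k * (b₁ - a₁) * (b₂ - a₂))) := by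
  have : IsProbabilityMeasure (volume[|Icc a₁ b₁]) :=
    cond_isProbabilityMeasure_of_finite (by simp [hab₁]) (by simp)
  have : IsProbabilityMeasure (volume[|Icc a₂ b₂]) :=
    cond_isProbabilityMeasure_of_finite (by simp [hab₂]) (by simp)
  have hE : MeasurableSet {p : ℝ × ℝ | p.2 ≤ b₂ + (p.1 - c) / k} :=
    measurableSet_le (by fun_prop) (by fun_prop)
  have hsection : ∀ x ∈ Icc a₁ b₁, (volume[|Icc a₂ b₂]).real
      (Prod.mk x ⁻¹' {p : ℝ × ℝ | p.2 ≤ b₂ + (p.1 - c) / k}) =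
        1 - max (c - x) 0 / (k * (b₂ - a₂)) := by
    intro x hx
    have hz : a₂ ≤ b₂ + (x - c) / k := by
      rw [← sub_le_iff_le_add', le_div_iff₀ hk]
      nlinarith [hx.1]
    rw [show Prod.mk x ⁻¹' _ = Iic (b₂ + (x - c) / k) from rfl, measureReal_cond_Icc_Iic hab₂ hz,
      show b₂ - (b₂ + (x - c) / k) = (c - x) / k by ring,
      ← zero_div k, max_div_div_right hk.le, zero_div, div_div, mul_comm]
  calc ((volume[|Icc a₁ b₁]).prod (volume[|Icc a₂ b₂])) {p | p.2 ≤ b₂ + (p.1 - c) / k}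
      = ENNReal.ofReal (∫ x, (volume[|Icc a₂ b₂]).real
          (Prod.mk x ⁻¹' {p : ℝ × ℝ | p.2 ≤ b₂ + (p.1 - c) / k}) ∂volume[|Icc a₁ b₁]) := by
        simp only [measureReal_def]
        rw [integral_toReal (measurable_measure_prodMk_left hE).aemeasurable
            (ae_of_all _ fun _ => measure_lt_top _ _), ← Measure.prod_apply hE,
          ENNReal.ofReal_toReal (measure_ne_top _ _)]
    _ = ENNReal.ofReal (∫ x, 1 - max (c - x) 0 / (k * (b₂ - a₂)) ∂volume[|Icc a₁ b₁]) := by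
        rw [integral_congr_ae (ae_cond_of_forall_mem measurableSet_Icc hsection)]
    _ = ENNReal.ofReal (1 - (c - a₁) ^ 2 / (2 * k * (b₁ - a₁) * (b₂ - a₂))) := by
        have hcont : Continuous fun x : ℝ => max (c - x) 0 := by fun_prop
        rw [integral_cond_Icc hab₁.le, intervalIntegral.integral_sub intervalIntegrable_const
            ((hcont.intervalIntegrable _ _).div_const _), intervalIntegral.integral_div,
          intervalIntegral.integral_max_sub_zero hc₁ hc₂, intervalIntegral.integral_const,
          smul_eq_mul]
        have : b₁ - a₁ ≠ 0 := by linarith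
        have : b₂ - a₂ ≠ 0 := by linarith
        field_simp

end UniformInterval

section PowerLaw

variable {a b c p : ℝ}

lemma sq_mul_rpow_neg_half {x : ℝ} (hx : 0 ≤ x) (c q : ℝ) :
    (c * x ^ (-q / 2)) ^ 2 = c ^ 2 * x ^ (-q) := by
  rw [mul_pow, ← Real.rpow_mul_natCast hx]
  norm_num

lemma sq_rpow_neg_half {l : ℝ} (hl : 0 ≤ l) (q : ℝ) : (l ^ 2) ^ (-q / 2) = l ^ (-q) := by
  rw [← Real.rpow_natCast, ← Real.rpow_mul hl]
  congr 1
  push_cast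
  ring

lemma mul_rpow_neg_le_mul_rpow_neg_iff {s t : ℝ} (ha : 0 < a) (hb : 0 < b) (hs : 0 < s)
    (ht : 0 < t) (hp : 0 < p) : a * s ^ (-p) ≤ b * t ^ (-p) ↔ (a / b) ^ (1 / p) * t ≤ s := by
  rw [← le_div_iff₀ ht, one_div, Real.rpow_inv_le_iff_of_pos (by positivity) (by positivity) hp,
    Real.div_rpow hs.le ht.le, Real.rpow_neg hs.le, Real.rpow_neg ht.le, ← div_eq_mul_inv,
    ← div_eq_mul_inv, div_le_div_iff₀ (by positivity) (by positivity),
    div_le_div_iff₀ hb (by positivity), mul_comm b]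

lemma mul_rpow_neg_lt_mul_rpow_neg_iff {s t : ℝ} (ha : 0 < a) (hb : 0 < b) (hs : 0 < s)
    (ht : 0 < t) (hp : 0 < p) : a * s ^ (-p) < b * t ^ (-p) ↔ (a / b) ^ (1 / p) * t < s := by
  rw [← lt_div_iff₀ ht, one_div, Real.rpow_inv_lt_iff_of_pos (by positivity) (by positivity) hp,
    Real.div_rpow hs.le ht.le, Real.rpow_neg hs.le, Real.rpow_neg ht.le, ← div_eq_mul_inv,
    ← div_eq_mul_inv, div_lt_div_iff₀ (by positivity) (by positivity),
    div_lt_div_iff₀ hb (by positivity), mul_comm b]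

lemma mul_sq_mul_rpow_neg_half_le_iff {s t : ℝ} (ha : 0 < a) (hb : 0 < b) (hc : 0 < c)
    (hs : 0 < s) (ht : 0 < t) (hp : 0 < p) :
    a * (c * s ^ (-p / 2)) ^ 2 ≤ b * (c * t ^ (-p / 2)) ^ 2 ↔ (a / b) ^ (1 / p) * t ≤ s := by
  rw [sq_mul_rpow_neg_half hs.le, sq_mul_rpow_neg_half ht.le, mul_left_comm, mul_left_comm b,
    mul_le_mul_iff_right₀ (by positivity), mul_rpow_neg_le_mul_rpow_neg_iff ha hb hs ht hp]

lemma div_mul_sq_mul_rpow_neg_half_lt_iff {s t γ : ℝ} (ha : 0 < a) (hb : 0 < b) (hc : 0 < c)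
    (hs : 0 < s) (ht : 0 < t) (hp : 0 < p) (hγ : 0 < γ) :
    a / b * (c * s ^ (-p / 2)) ^ 2 / (c * t ^ (-p / 2)) ^ 2 < γ ↔
      (a / (γ * b)) ^ (1 / p) * t < s := by
  rw [div_lt_iff₀ (by positivity), div_mul_eq_mul_div, div_lt_iff₀ hb, mul_right_comm γ,
    sq_mul_rpow_neg_half hs.le, sq_mul_rpow_neg_half ht.le, mul_left_comm, mul_left_comm (γ * b),
    mul_lt_mul_iff_right₀ (by positivity),
    mul_rpow_neg_lt_mul_rpow_neg_iff ha (by positivity) hs ht hp]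

lemma mul_sq_mul_rpow_neg_rpow_neg_one_div {u x : ℝ} (hu : 0 < u) (hc : 0 < c) (hx : 0 < x)
    (hp : 0 < p) : (u * c ^ 2 * x ^ (-p)) ^ (-1 / p) = x / (u ^ (1 / p) * c ^ (2 / p)) := by
  rw [Real.mul_rpow (by positivity) (by positivity), Real.mul_rpow hu.le (by positivity),
    ← Real.rpow_natCast c 2, ← Real.rpow_mul hc.le, ← Real.rpow_mul hx.le,
    show -p * (-1 / p) = 1 by field_simp, Real.rpow_one, show -1 / p = -(1 / p) by ring,
    show ((2 : ℕ) : ℝ) * -(1 / p) = -(2 / p) by push_cast; ring,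
    Real.rpow_neg hu.le, Real.rpow_neg hc.le]
  field_simp

end PowerLaw

noncomputable def sopS₃ (ψ p γ JBmin JBmax JEmin JEmax : ℝ) : ℝ :=
  ψ * p ^ 2 * JBmin ^ (-1 / p) * (JEmin ^ (-1 / p) - (JBmax / γ) ^ (-1 / p)) -
    ψ / 2 * p ^ 2 * γ ^ (-1 / p) * (JEmin ^ (-2 / p) - (JBmax / γ) ^ (-2 / p)) +
    ψ * p ^ 2 * (JBmin ^ (-1 / p) - JBmax ^ (-1 / p)) * ((JBmax / γ) ^ (-1 / p) - JEmax ^ (-1 / p))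

lemma sopS₃_eq {D ρ l p a b c γ vmin vmid vmax Ξ₁ Ξ₂ ψ JBmin JBmax JEmin JEmax : ℝ}
    (hρ : 0 ≤ ρ) (hρD : ρ < D) (hl : 0 < l) (hp : 0 < p) (ha : 0 < a) (hb : 0 < b) (hc : 0 < c)
    (hγ : 0 < γ)
    (hvmin : vmin = c * (D ^ 2 + l ^ 2) ^ (-p / 2)) (hvmid : vmid = c * (ρ ^ 2 + l ^ 2) ^ (-p / 2))
    (hvmax : vmax = c * l ^ (-p))
    (hΞ₁ : Ξ₁ = 2 / (p * D ^ 2) * c ^ (2 / p))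
    (hΞ₂ : Ξ₂ = 2 / (p * (D ^ 2 - ρ ^ 2)) * c ^ (2 / p))
    (hψ : ψ = Ξ₁ * Ξ₂ / 4 * (a * b) ^ (1 / p))
    (hJBmin : JBmin = a * vmin ^ 2) (hJBmax : JBmax = a * vmax ^ 2)
    (hJEmin : JEmin = b * vmin ^ 2) (hJEmax : JEmax = b * vmid ^ 2) :
    sopS₃ ψ p γ JBmin JBmax JEmin JEmax =
      1 - ((a / (γ * b)) ^ (1 / p) * (D ^ 2 + l ^ 2) - l ^ 2) ^ 2 /
        (2 * (a / (γ * b)) ^ (1 / p) * D ^ 2 * (D ^ 2 - ρ ^ 2)) := by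
  have hD : 0 < D := hρ.trans_lt hρD
  have hJ {u x : ℝ} (hx : 0 ≤ x) : u * (c * x ^ (-p / 2)) ^ 2 = u * c ^ 2 * x ^ (-p) := by
    rw [sq_mul_rpow_neg_half hx, mul_assoc]
  rw [hvmax, ← sq_rpow_neg_half hl.le] at hJBmax
  rw [hvmin, hJ (by positivity)] at hJBmin hJEmin
  rw [hvmid, hJ (by positivity)] at hJEmax
  rw [hJ (by positivity)] at hJBmax
  have hJ₂ {J : ℝ} (hJ : 0 ≤ J) : J ^ (-2 / p) = (J ^ (-1 / p)) ^ 2 := by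
    rw [← Real.rpow_mul_natCast hJ]
    ring_nf
  have hJBγ : JBmax / γ = a / γ * c ^ 2 * (l ^ 2) ^ (-p) := by
    rw [hJBmax]
    ring
  -- Both sides become rational functions of `a ^ (1 / p)`, `b ^ (1 / p)`, `c ^ (2 / p)`
  -- and `γ ^ (1 / p)`.
  rw [sopS₃, hJ₂ (by rw [hJEmin]; positivity), hJ₂ (by rw [hJBγ]; positivity),
    hJBmin, hJEmin, hJEmax, hJBγ, hJBmax, hψ, hΞ₁, hΞ₂,
    mul_sq_mul_rpow_neg_rpow_neg_one_div ha hc (by positivity) hp,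
    mul_sq_mul_rpow_neg_rpow_neg_one_div ha hc (by positivity) hp,
    mul_sq_mul_rpow_neg_rpow_neg_one_div hb hc (by positivity) hp,
    mul_sq_mul_rpow_neg_rpow_neg_one_div hb hc (by positivity) hp,
    mul_sq_mul_rpow_neg_rpow_neg_one_div (div_pos ha hγ) hc (by positivity) hp,
    show -1 / p = -(1 / p) by ring, Real.rpow_neg hγ.le,
    Real.div_rpow ha.le (mul_pos hγ hb).le, Real.mul_rpow hγ.le hb.le,
    Real.div_rpow ha.le hγ.le, Real.mul_rpow ha.le hb.le]
  have : D ^ 2 - ρ ^ 2 ≠ 0 := by nlinarith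
  have : p ≠ 0 := hp.ne'
  have : a ^ (1 / p) ≠ 0 := (Real.rpow_pos_of_pos ha _).ne'
  have : b ^ (1 / p) ≠ 0 := (Real.rpow_pos_of_pos hb _).ne'
  have : c ^ (2 / p) ≠ 0 := (Real.rpow_pos_of_pos hc _).ne'
  have : γ ^ (1 / p) ≠ 0 := (Real.rpow_pos_of_pos hγ _).ne'
  field_simp
  ring

/-- Theorem 3, case 4: if `χ²·v_max²/v_mid² < γ_th ≤ χ²·v_max²/v_min²` (with `χ² = a/b`),
then `Pr(J_B ≤ γ_th·J_E) = S₃`. -/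
theorem sop_case_four
    (D ρ l m c : ℝ) (hD : 0 < D) (hρ0 : 0 ≤ ρ) (hρD : ρ < D) (hl : 0 < l) (hm : 0 < m)
    (hc : 0 < c)
    (vmin vmid vmax : ℝ)
    (hvmin : vmin = c * (D ^ 2 + l ^ 2) ^ (-(m + 3) / 2))
    (hvmid : vmid = c * (ρ ^ 2 + l ^ 2) ^ (-(m + 3) / 2))
    (hvmax : vmax = c * l ^ (-(m + 3)))
    (a b : ℝ) (ha : 0 < a) (hb : 0 < b)
    {Ω : Type*} [MeasureSpace Ω] [IsProbabilityMeasure (ℙ : Measure Ω)]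
    (U W : Ω → EuclideanSpace ℝ (Fin 2)) (hU : Measurable U) (hW : Measurable W)
    (hUlaw : Measure.map U (ℙ : Measure Ω) =
      (volume (Metric.closedBall (0 : EuclideanSpace ℝ (Fin 2)) D))⁻¹ •
        volume.restrict (Metric.closedBall (0 : EuclideanSpace ℝ (Fin 2)) D))
    (hWlaw : Measure.map W (ℙ : Measure Ω) =
      (volume (Metric.closedBall (0 : EuclideanSpace ℝ (Fin 2)) D \
          Metric.ball (0 : EuclideanSpace ℝ (Fin 2)) ρ))⁻¹ •
        volume.restrict (Metric.closedBall (0 : EuclideanSpace ℝ (Fin 2)) D \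
          Metric.ball (0 : EuclideanSpace ℝ (Fin 2)) ρ))
    (hindep : IndepFun U W (ℙ : Measure Ω))
    (HB HE : Ω → ℝ)
    (hHB : ∀ ω, HB ω = c * (‖U ω‖ ^ 2 + l ^ 2) ^ (-(m + 3) / 2))
    (hHE : ∀ ω, HE ω = c * (‖W ω‖ ^ 2 + l ^ 2) ^ (-(m + 3) / 2))
    (JB JE : Ω → ℝ)
    (hJB : ∀ ω, JB ω = a * HB ω ^ 2) (hJE : ∀ ω, JE ω = b * HE ω ^ 2)
    (γth : ℝ) (hγ : 0 < γth)
    (Ξ₁ Ξ₂ ψ : ℝ)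
    (hΞ₁ : Ξ₁ = 2 / ((m + 3) * D ^ 2) * c ^ (2 / (m + 3)))
    (hΞ₂ : Ξ₂ = 2 / ((m + 3) * (D ^ 2 - ρ ^ 2)) * c ^ (2 / (m + 3)))
    (hψ : ψ = Ξ₁ * Ξ₂ / 4 * (a * b) ^ (1 / (m + 3)))
    (JBmin JBmax JEmin JEmax : ℝ)
    (hJBmin : JBmin = a * vmin ^ 2) (hJBmax : JBmax = a * vmax ^ 2)
    (hJEmin : JEmin = b * vmin ^ 2) (hJEmax : JEmax = b * vmid ^ 2)
    (hcase₁ : a / b * vmax ^ 2 / vmid ^ 2 < γth) (hcase₂ : γth ≤ a / b * vmax ^ 2 / vmin ^ 2) :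
    (ℙ : Measure Ω) {ω | JB ω ≤ γth * JE ω} =
      ENNReal.ofReal
        (ψ * (m + 3) ^ 2 * JBmin ^ (-1 / (m + 3)) *
            (JEmin ^ (-1 / (m + 3)) - (JBmax / γth) ^ (-1 / (m + 3))) -
          ψ / 2 * (m + 3) ^ 2 * γth ^ (-1 / (m + 3)) *
            (JEmin ^ (-2 / (m + 3)) - (JBmax / γth) ^ (-2 / (m + 3))) +
          ψ * (m + 3) ^ 2 * (JBmin ^ (-1 / (m + 3)) - JBmax ^ (-1 / (m + 3))) *
            ((JBmax / γth) ^ (-1 / (m + 3)) - JEmax ^ (-1 / (m + 3)))) := by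
  have hp : 0 < m + 3 := by linarith
  have hvmax' : vmax = c * (l ^ 2) ^ (-(m + 3) / 2) := by rw [hvmax, sq_rpow_neg_half hl.le]
  set k := (a / (γth * b)) ^ (1 / (m + 3))
  have hk₀ : 0 < k := by positivity
  have hk₁ : k * (ρ ^ 2 + l ^ 2) < l ^ 2 := by
    rw [hvmax', hvmid] at hcase₁
    exact (div_mul_sq_mul_rpow_neg_half_lt_iff ha hb hc (by positivity) (by positivity) hp hγ).1
      hcase₁
  have hk_lt_one : k < 1 := by nlinarith [mul_nonneg hk₀.le (sq_nonneg ρ)]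
  have hk₂ : l ^ 2 ≤ k * (D ^ 2 + l ^ 2) := by
    rw [hvmax', hvmin, ← not_lt,
      div_mul_sq_mul_rpow_neg_half_lt_iff ha hb hc (by positivity) (by positivity) hp hγ] at hcase₂
    exact not_lt.1 hcase₂
  have hlaw : (ℙ : Measure Ω).map (fun ω => (‖U ω‖ ^ 2, ‖W ω‖ ^ 2)) =
      (volume[|Icc 0 (D ^ 2)]).prod (volume[|Icc (ρ ^ 2) (D ^ 2)]) := by
    have hf : Measurable fun u : EuclideanSpace ℝ (Fin 2) => ‖u‖ ^ 2 := by fun_prop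
    rw [hindep.map_prodMk_comp hU hW hf hf, hUlaw, hWlaw]
    exact congr_arg₂ _ (EuclideanSpace.map_norm_sq_cond_closedBall_fin_two hD.le)
      (EuclideanSpace.map_norm_sq_cond_annulus_fin_two hρ0 hD.le)
  have hevent : {ω | JB ω ≤ γth * JE ω} = (fun ω => (‖U ω‖ ^ 2, ‖W ω‖ ^ 2)) ⁻¹'
      {q | q.2 ≤ D ^ 2 + (q.1 - (k * (D ^ 2 + l ^ 2) - l ^ 2)) / k} := by
    ext ω
    simp only [mem_ofPred_eq, mem_preimage, hJB, hJE, hHB, hHE, ← mul_assoc]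
    rw [mul_sq_mul_rpow_neg_half_le_iff ha (mul_pos hγ hb) hc (by positivity) (by positivity) hp,
      show D ^ 2 + (‖U ω‖ ^ 2 - (k * (D ^ 2 + l ^ 2) - l ^ 2)) / k =
        (‖U ω‖ ^ 2 + l ^ 2) / k - l ^ 2 by field_simp; ring,
      le_sub_iff_add_le, le_div_iff₀ hk₀, mul_comm]
  rw [hevent, ← Measure.map_apply (by fun_prop) (measurableSet_le (by fun_prop) (by fun_prop)),
    hlaw, prod_cond_Icc_below_line (by positivity) (by nlinarith) (by linarith)
      (by nlinarith [sq_nonneg D]) hk₀ (by linarith), sub_zero, sub_zero,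
    ← sopS₃_eq hρ0 hρD hl hp ha hb hc hγ hvmin hvmid hvmax hΞ₁ hΞ₂ hψ hJBmin hJBmax hJEmin hJEmax]
  rfl
end
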